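/- Bias expansion for partially uncorrelated confounders (Lemma on independent expansion): let H be a real Hilbert space, W a complete subspace, and y, d, u_1, …, u_l ∈ H such that d^{⊥W} ≠ 0, each u_j^{⊥W} ≠ 0, ⟨u_i^{⊥W}, u_j^{⊥W}⟩ = 0 for all i ≠ j, and all residuals appearing below are nonzero. Let U := span{u_1, …, u_l} and U_{−j} := span{u_i : i ≠ j}. Then β_{y∼d|W} − β_{y∼d|W+U} = Σ_{j=1}^{l} β_{y∼u_j|W+span(d)+U_{−j}}·β_{u_j∼d|W}, where β_{a∼b|M} := ⟨a^{⊥M}, b^{⊥M}⟩/‖b^{⊥M}‖². -/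

import Mathlib

/-!
R²-calculus in real Hilbert spaces (Freidling & Zhao, "Optimization-based
Sensitivity Analysis for Unmeasured Confounding using Partial Correlations").
-/

noncomputable section

open Submodule RealInnerProductSpace

variable {H : Type*} [NormedAddCommGroup H] [InnerProductSpace ℝ H]

/-- The residual `h^{⊥M} = h − P_M h` of `h` after projecting onto `M`. -/
def resid (M : Submodule ℝ H) [HasOrthogonalProjection M] (h : H) : H :=
  h - (orthogonalProjection M h : H)

/-- The marginal R²-value `R²_{y∼X} = 1 − ‖y^{⊥X}‖²/‖y‖²`. -/
def R2 (y : H) (X : Submodule ℝ H) [HasOrthogonalProjection X] : ℝ :=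
  1 - ‖resid X y‖ ^ 2 / ‖y‖ ^ 2

/-- The partial R²-value `R²_{y∼X|Z} = (R²_{y∼X+Z} − R²_{y∼Z})/(1 − R²_{y∼Z})`. -/
def R2p (y : H) (X Z : Submodule ℝ H) [HasOrthogonalProjection (X ⊔ Z)]
    [HasOrthogonalProjection Z] : ℝ :=
  (R2 y (X ⊔ Z) - R2 y Z) / (1 - R2 y Z)

/-- The partial R-value `R_{y∼x|Z} = ⟪y^{⊥Z}, x^{⊥Z}⟫/(‖y^{⊥Z}‖·‖x^{⊥Z}‖)`. -/
def Rp (y x : H) (Z : Submodule ℝ H) [HasOrthogonalProjection Z] : ℝ :=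
  ⟪resid Z y, resid Z x⟫ / (‖resid Z y‖ * ‖resid Z x‖)

/-- The partial f-value `f_{y∼x|Z} = R_{y∼x|Z}/√(1 − R²_{y∼x|Z})`. -/
def fp (y x : H) (Z : Submodule ℝ H) [HasOrthogonalProjection Z] : ℝ :=
  Rp y x Z / Real.sqrt (1 - Rp y x Z ^ 2)

/-- The regression estimand `β_{y∼d|M} = ⟪y^{⊥M}, d^{⊥M}⟫/‖d^{⊥M}‖²`. -/
def betaReg (y d : H) (M : Submodule ℝ H) [HasOrthogonalProjection M] : ℝ :=
  ⟪resid M y, resid M d⟫ / ‖resid M d‖ ^ 2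

/-- `σ_{y∼M} = ‖y^{⊥M}‖`. -/
def sigv (y : H) (M : Submodule ℝ H) [HasOrthogonalProjection M] : ℝ :=
  ‖resid M y‖

/-!
This is the omitted-variable-bias formula. Projecting `y` onto `W + U` and regressing the
residual on `d^{⊥(W+U)}` gives `y = β d + ∑ γⱼ uⱼ + w + ε` with `β = β_{y∼d|W+U}`, `w ∈ W` and
`ε ⊥ W + U + span d`. Since `β_{·∼x|M}` is linear, equals `1` at `x`, and vanishes on `M` and on
vectors orthogonal to `M + span x`, reading this decomposition through `β_{·∼uⱼ|W+span(d)+U₋ⱼ}`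
gives `γⱼ`, and through `β_{·∼d|W}` gives `β + ∑ γⱼ β_{uⱼ∼d|W}`.
-/

section

variable {M : Submodule ℝ H} [HasOrthogonalProjection M]

lemma resid_mem_orthogonal (x : H) : resid M x ∈ Mᗮ :=
  sub_starProjection_mem_orthogonal x

lemma sub_resid_mem (x : H) : x - resid M x ∈ M := by
  simp [resid]

lemma betaReg_eq_inner_div (y x : H) :
    betaReg y x M = ⟪y, resid M x⟫ / ‖resid M x‖ ^ 2 := by
  have hproj : ⟪y - resid M y, resid M x⟫ = 0 :=
    inner_right_of_mem_orthogonal (sub_resid_mem y) (resid_mem_orthogonal x)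
  rw [inner_sub_left, sub_eq_zero] at hproj
  rw [betaReg, hproj]

lemma betaReg_add_left (y₁ y₂ x : H) :
    betaReg (y₁ + y₂) x M = betaReg y₁ x M + betaReg y₂ x M := by
  simp only [betaReg_eq_inner_div, inner_add_left, add_div]

lemma betaReg_smul_left (a : ℝ) (y x : H) : betaReg (a • y) x M = a * betaReg y x M := by
  simp only [betaReg_eq_inner_div, real_inner_smul_left, mul_div_assoc]

lemma betaReg_sum_left {ι : Type*} (s : Finset ι) (f : ι → H) (x : H) :
    betaReg (∑ i ∈ s, f i) x M = ∑ i ∈ s, betaReg (f i) x M := by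
  simp only [betaReg_eq_inner_div, sum_inner, Finset.sum_div]

lemma betaReg_self {x : H} (hx : resid M x ≠ 0) : betaReg x x M = 1 := by
  rw [betaReg, real_inner_self_eq_norm_sq]
  exact div_self (pow_ne_zero 2 (norm_ne_zero_iff.2 hx))

lemma betaReg_of_mem {m : H} (hm : m ∈ M) (x : H) : betaReg m x M = 0 := by
  rw [betaReg_eq_inner_div, inner_right_of_mem_orthogonal hm (resid_mem_orthogonal x), zero_div]

lemma betaReg_of_mem_orthogonal_sup {ε x : H} (hε : ε ∈ (M ⊔ ℝ ∙ x)ᗮ) : betaReg ε x M = 0 := by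
  have hx : resid M x ∈ M ⊔ ℝ ∙ x := by
    rw [show resid M x = x - (x - resid M x) by abel]
    exact sub_mem (mem_sup_right (mem_span_singleton_self x)) (mem_sup_left (sub_resid_mem x))
  rw [betaReg_eq_inner_div, inner_left_of_mem_orthogonal hx hε, zero_div]

lemma betaReg_eq_of_eq_smul_add_add {y x m ε : H} {a : ℝ} (hx : resid M x ≠ 0) (hm : m ∈ M)
    (hε : ε ∈ (M ⊔ ℝ ∙ x)ᗮ) (hy : y = a • x + m + ε) : betaReg y x M = a := by
  rw [hy, betaReg_add_left, betaReg_add_left, betaReg_smul_left, betaReg_self hx,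
    betaReg_of_mem hm, betaReg_of_mem_orthogonal_sup hε, mul_one, add_zero, add_zero]

lemma inner_resid_sub_betaReg_smul (y d : H) :
    ⟪resid M y - betaReg y d M • resid M d, resid M d⟫ = 0 := by
  by_cases hd : resid M d = 0
  · simp [hd]
  rw [inner_sub_left, real_inner_smul_left, real_inner_self_eq_norm_sq, betaReg,
    div_mul_cancel₀ _ (pow_ne_zero 2 (norm_ne_zero_iff.2 hd)), sub_self]

lemma exists_eq_betaReg_smul_add (y d : H) :
    ∃ n ∈ M, ∃ ε ∈ (M ⊔ ℝ ∙ d)ᗮ, y = betaReg y d M • d + n + ε := by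
  set ε := resid M y - betaReg y d M • resid M d
  have hεM : ε ∈ Mᗮ := sub_mem (resid_mem_orthogonal y) (smul_mem _ _ (resid_mem_orthogonal d))
  have hεd : ⟪d, ε⟫ = 0 := by
    have hsplit : d = resid M d + (d - resid M d) := by abel
    rw [hsplit, inner_add_left, real_inner_comm, inner_resid_sub_betaReg_smul,
      inner_right_of_mem_orthogonal (sub_resid_mem d) hεM, add_zero]
  refine ⟨(y - resid M y) - betaReg y d M • (d - resid M d),
    sub_mem (sub_resid_mem y) (smul_mem _ _ (sub_resid_mem d)), ε, ?_, by module⟩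
  rw [← inf_orthogonal]
  exact ⟨hεM, mem_orthogonal_singleton_iff_inner_right.2 hεd⟩

end

/-- bias expansion for partially uncorrelated confounders. -/
theorem independent_expansion [CompleteSpace H]
    (W : Submodule ℝ H) [CompleteSpace W] {l : ℕ} (y d : H) (u : Fin l → H)
    [CompleteSpace ↥(W ⊔ Submodule.span ℝ (Set.range u))]
    [∀ j : Fin l, CompleteSpace ↥(W ⊔ (ℝ ∙ d) ⊔ Submodule.span ℝ (u '' {i | i ≠ j}))]
    (hd : resid W d ≠ 0) (hu : ∀ j, resid W (u j) ≠ 0)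
    (horth : ∀ i j, i ≠ j → ⟪resid W (u i), resid W (u j)⟫ = 0)
    (hd2 : resid (W ⊔ Submodule.span ℝ (Set.range u)) d ≠ 0)
    (hu2 : ∀ j, resid (W ⊔ (ℝ ∙ d) ⊔ Submodule.span ℝ (u '' {i | i ≠ j})) (u j) ≠ 0) :
    betaReg y d W - betaReg y d (W ⊔ Submodule.span ℝ (Set.range u)) =
      ∑ j : Fin l,
        betaReg y (u j) (W ⊔ (ℝ ∙ d) ⊔ Submodule.span ℝ (u '' {i | i ≠ j})) *
          betaReg (u j) d W := by
  set U := span ℝ (Set.range u)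
  obtain ⟨n, hn, ε, hε, hy⟩ := exists_eq_betaReg_smul_add (M := W ⊔ U) y d
  obtain ⟨w, hw, v, hv, rfl⟩ := mem_sup.1 hn
  obtain ⟨γ, rfl⟩ := (mem_span_range_iff_exists_fun ℝ).1 hv
  set β := betaReg y d (W ⊔ U)
  have hshort : betaReg y d W = β + ∑ j, γ j * betaReg (u j) d W := by
    have hεW : ε ∈ (W ⊔ ℝ ∙ d)ᗮ := orthogonal_le (sup_le_sup_right le_sup_left _) hε
    rw [hy, betaReg_add_left, betaReg_add_left, betaReg_add_left, betaReg_smul_left,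
      betaReg_self hd, betaReg_of_mem hw, betaReg_sum_left, betaReg_of_mem_orthogonal_sup hεW]
    simp only [betaReg_smul_left]
    ring
  have hlong (j : Fin l) : betaReg y (u j) (W ⊔ (ℝ ∙ d) ⊔ span ℝ (u '' {i | i ≠ j})) = γ j := by
    have hm : β • d + w + ∑ i ∈ Finset.univ.erase j, γ i • u i ∈
        W ⊔ (ℝ ∙ d) ⊔ span ℝ (u '' {i | i ≠ j}) :=
      add_mem (add_mem (mem_sup_left (mem_sup_right (smul_mem _ _ (mem_span_singleton_self d))))
        (mem_sup_left (mem_sup_left hw)))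
        (mem_sup_right (sum_mem fun i hi =>
          smul_mem _ _ (subset_span (Set.mem_image_of_mem u (Finset.ne_of_mem_erase hi)))))
    have hle : W ⊔ (ℝ ∙ d) ⊔ span ℝ (u '' {i | i ≠ j}) ⊔ ℝ ∙ u j ≤ W ⊔ U ⊔ ℝ ∙ d :=
      sup_le (sup_le (sup_le (le_sup_left.trans le_sup_left) le_sup_right)
          ((span_mono (Set.image_subset_range _ _)).trans (le_sup_right.trans le_sup_left)))
        ((span_mono (Set.singleton_subset_iff.2 (Set.mem_range_self j))).trans
          (le_sup_right.trans le_sup_left))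
    refine betaReg_eq_of_eq_smul_add_add (hu2 j) hm (orthogonal_le hle hε) ?_
    rw [hy, ← Finset.add_sum_erase _ _ (Finset.mem_univ j)]
    abel
  rw [hshort]
  simp only [hlong]
  ring
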